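/- Let G be a uniform pro-p group whose associated ℚ_p-Lie algebra g_K (base-changed to a finite extension K of ℚ_p) is split semisimple, and let W be a finite-dimensional irreducible U(g_K)-representation, regarded as a K[[G]]-module via the microlocalisation K[[G]] → Û(g_K). Then for every finitely generated K[[G]]-module M̃ with microlocalisation M̂ := Û(g_K) ⊗_{K[[G]]} M̃, the natural map M̃_W → M̂_W is an isomorphism, where M̃_W := M̃/Ann_{K[[G]]}(W)·M̃ and M̂_W := M̂/Ann_{Û(g_K)}(W)·M̂. In particular, the injection K[[G]]/Ann_{K[[G]]}(W) → Û(g_K)/Ann_{Û(g_K)}(W) ≅ End_K(W) is an isomorphism. -/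

import Mathlib

set_option synthInstance.maxHeartbeats 1000000
set_option maxHeartbeats 1000000

/-!
STATEMENT 13. Let `p` be an odd prime, `K` a finite extension of `ℚ_p` with ring of
integers `R`, and `G` a uniform pro-`p` group whose associated `ℚ_p`-Lie algebra
(base-changed to `K`) is split semisimple.  `K[[G]] := (lim_N R[G/N]) ⊗_R K` is the
Iwasawa algebra (inverse limit over open normal subgroups `N`), `𝔪 := ker(R[[G]] → k)`
its maximal ideal, and `S₀ := ∪_{a≥0} (p^a + 𝔪^{a+1})` the microlocal Ore set of
Ardakov–Wadsley; the microlocalisation `Φ : K[[G]] → Û(g_K)` is the flat map obtained by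
inverting `S₀` (characterised below by its universal property).  Let `W` be a
finite-dimensional irreducible `U(g_K)`-representation, regarded as a `K[[G]]`-module via
`Φ` (on `W` every element of `S₀` acts invertibly).

THEOREM.  For every finitely generated `K[[G]]`-module `M̃` with microlocalisation
`M̂ := Û(g_K) ⊗_{K[[G]]} M̃` (characterised by its universal property), the natural map
`M̃_W → M̂_W` is an isomorphism, where `M̃_W := M̃/Ann_{K[[G]]}(W)·M̃` and
`M̂_W := M̂/Ann_{Û(g_K)}(W)·M̂`.  In particular the injection
`K[[G]]/Ann_{K[[G]]}(W) → Û(g_K)/Ann_{Û(g_K)}(W) ≅ End_K(W)` is an isomorphism.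
-/

open scoped TensorProduct

noncomputable section

variable (p : ℕ) [Fact (Nat.Prime p)]
  -- `K` a finite extension of `ℚ_p`, `R` its ring of integers (a local ring):
  (K : Type) [Field K] [Algebra ℚ_[p] K] [FiniteDimensional ℚ_[p] K]
  (R : Type) [CommRing R] [IsLocalRing R] [Algebra R K] [Algebra ℤ_[p] R] [Algebra ℤ_[p] K]
  [IsScalarTower ℤ_[p] R K] [IsScalarTower ℤ_[p] ℚ_[p] K] [IsIntegralClosure R ℤ_[p] K]
  -- `G` a compact (profinite) topological group:
  (G : Type) [Group G] [TopologicalSpace G] [IsTopologicalGroup G] [CompactSpace G]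
  [TotallyDisconnectedSpace G]

/-- Transition maps of the system `N ↦ R[G/N]` over open normal subgroups. -/
def transIw {N M : OpenNormalSubgroup G} (hle : N.toSubgroup ≤ M.toSubgroup) :
    MonoidAlgebra R (G ⧸ N.toSubgroup) →+* MonoidAlgebra R (G ⧸ M.toSubgroup) :=
  MonoidAlgebra.mapDomainRingHom R
    (QuotientGroup.map N.toSubgroup M.toSubgroup (MonoidHom.id _) (by simpa using hle))

/-- The integral Iwasawa algebra `R[[G]] = lim_N R[G/N]` over the open normal subgroups
of `G`. -/
def IwasawaInt : Subalgebra R (∀ N : OpenNormalSubgroup G, MonoidAlgebra R (G ⧸ N.toSubgroup)) where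
  carrier := {f | ∀ (N M : OpenNormalSubgroup G) (hle : N.toSubgroup ≤ M.toSubgroup),
    transIw R G hle (f N) = f M}
  one_mem' := by intro N M hle; simp
  mul_mem' := by
    intro f g hf hg N M hle
    simp only [Set.mem_setOf_eq] at *
    simp only [Pi.mul_apply, map_mul, hf N M hle, hg N M hle]
  add_mem' := by
    intro f g hf hg N M hle
    simp only [Set.mem_setOf_eq] at *
    simp only [Pi.add_apply, map_add, hf N M hle, hg N M hle]
  algebraMap_mem' := by
    intro c N M hle
    simp only [Set.mem_setOf_eq, Pi.algebraMap_apply]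
    rw [MonoidAlgebra.coe_algebraMap, MonoidAlgebra.coe_algebraMap]
    simp [transIw, MonoidAlgebra.mapDomainRingHom_apply, Finsupp.mapDomain_single]

abbrev IwasawaZ : Type := IwasawaInt R G

/-- The Iwasawa algebra `K[[G]] = R[[G]] ⊗_R K`. -/
abbrev IwasawaK : Type := K ⊗[R] IwasawaZ R G

/-- The canonical map `R[[G]] → K[[G]]`. -/
def toIwasawaK : IwasawaZ R G →+* IwasawaK K R G :=
  (Algebra.TensorProduct.includeRight : IwasawaZ R G →ₐ[R] IwasawaK K R G).toRingHom

/-- `⊤` as an open normal subgroup of `G`. -/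
def topONS : OpenNormalSubgroup G where
  toOpenSubgroup :=
    { toSubgroup := (⊤ : Subgroup G)
      isOpen' := by
        show IsOpen ((⊤ : Subgroup G) : Set G)
        rw [Subgroup.coe_top]
        exact isOpen_univ }
  isNormal' := by infer_instance

/-- The residue map `R[[G]] → k` to the residue field of `R` (augmentation followed by
reduction). -/
def residueIw : IwasawaZ R G →+* IsLocalRing.ResidueField R :=
  (IsLocalRing.residue R).comp
    ((((MonoidAlgebra.lift R R (G ⧸ (topONS G).toSubgroup)) 1).toRingHom).comp
      ((Pi.evalRingHom (fun N : OpenNormalSubgroup G => MonoidAlgebra R (G ⧸ N.toSubgroup)) (topONS G)).comp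
        (Subalgebra.val (IwasawaInt R G)).toRingHom))

/-- The maximal ideal `𝔪 = ker(R[[G]] → k)`. -/
def mIw : Ideal (IwasawaZ R G) := RingHom.ker (residueIw R G)

/-- Powers of (the left ideal) `𝔪` in the noncommutative ring `R[[G]]`:
`𝔪^(n+1) = span {x·y : x ∈ 𝔪^n, y ∈ 𝔪}`, `𝔪^0 = (1)`. -/
def mIwPow : ℕ → Submodule (IwasawaZ R G) (IwasawaZ R G)
  | 0 => ⊤
  | (n+1) => Submodule.span _ {z | ∃ x ∈ mIwPow n, ∃ y ∈ mIw R G, z = x * y}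

/-- The microlocal Ore set `S₀ = ∪_{a ≥ 0} (p^a + 𝔪^{a+1}) ⊆ R[[G]]`. -/
def oreS : Set (IwasawaZ R G) :=
  {s | ∃ (a : ℕ) (y : IwasawaZ R G), y ∈ mIwPow R G (a+1) ∧ s = (p : IwasawaZ R G)^a + y}


lemma aux_isUnit_subalgebra {K E : Type*} [Field K] [Ring E] [Algebra K E]
    (A' : Subalgebra K E) [FiniteDimensional K A'] (x : ↥A') (hx : IsUnit (x : E)) :
    IsUnit x := by
  have hinjL : Function.Injective (LinearMap.mulLeft K x) := by
    intro y z h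
    simp only [LinearMap.mulLeft_apply] at h
    have h2 : (x : E) * y = (x : E) * z := by
      simpa using congrArg Subtype.val h
    exact Subtype.ext ((hx.mul_right_inj).1 h2)
  have hinjR : Function.Injective (LinearMap.mulRight K x) := by
    intro y z h
    simp only [LinearMap.mulRight_apply] at h
    have h2 : (y : E) * x = (z : E) * x := by
      simpa using congrArg Subtype.val h
    exact Subtype.ext ((hx.mul_left_inj).1 h2)
  obtain ⟨y, hy⟩ := (LinearMap.injective_iff_surjective.1 hinjL) 1
  obtain ⟨z, hz⟩ := (LinearMap.injective_iff_surjective.1 hinjR) 1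
  simp only [LinearMap.mulLeft_apply] at hy
  simp only [LinearMap.mulRight_apply] at hz
  have hzy : z = y := by
    calc z = z * (x * y) := by rw [hy, mul_one]
    _ = (z * x) * y := by rw [mul_assoc]
    _ = y := by rw [hz, one_mul]
  exact ⟨⟨x, y, hy, by rw [← hzy]; exact hz⟩, rfl⟩

theorem aux_h3 {K : Type} [Field K]
    (A : Type) [Ring A] [Algebra K A]
    (B : Type) [Ring B] [Algebra K B]
    (Φ : A →+* B)
    (S : Set A)
    (hΦK : ∀ c : K, Φ (algebraMap K A c) = algebraMap K B c)
    (hS₀ : ∀ s ∈ S, IsUnit (Φ s))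
    (huniv : ∀ (C : Type) (_ : Ring C) (ψ : A →+* C),
      (∀ s ∈ S, IsUnit (ψ s)) → ∃! ψ' : B →+* C, ψ'.comp Φ = ψ)
    (W : Type) [AddCommGroup W] [Module K W] [Module B W]
    [IsScalarTower K B W] [FiniteDimensional K W] :
    ∀ b : B, ∃ a : A, ∀ w : W, (b - Φ a) • w = 0 := by
  haveI : SMulCommClass B K W := ⟨fun b k w => by
    rw [← algebraMap_smul B k w, ← algebraMap_smul B k (b • w), smul_smul, smul_smul,
      Algebra.commutes]⟩
  let ρ : B →+* Module.End K W := Module.toModuleEnd K W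
  have hρ : ∀ (b : B) (w : W), ρ b w = b • w := fun b w => rfl
  let ψa : A →ₐ[K] Module.End K W :=
    { toRingHom := ρ.comp Φ,
      commutes' := fun c => by
        show ρ (Φ (algebraMap K _ c)) = algebraMap K (Module.End K W) c
        rw [hΦK]
        ext w
        rw [hρ, Module.algebraMap_end_apply, algebraMap_smul] }
  have hψa : ∀ a : A, ψa a = ρ (Φ a) := fun a => rfl
  haveI : FiniteDimensional K ↥ψa.range :=
    FiniteDimensional.of_injective (Subalgebra.val ψa.range).toLinearMap Subtype.val_injective
  have hunits : ∀ s ∈ S, IsUnit (ψa.rangeRestrict.toRingHom s) := by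
    intro s hs
    apply aux_isUnit_subalgebra
    have h1 : ((ψa.rangeRestrict.toRingHom s : ↥ψa.range) : Module.End K W) = ρ (Φ s) := rfl
    rw [h1]
    exact (hS₀ s hs).map ρ
  obtain ⟨ψ', hψ', -⟩ := huniv ↥ψa.range inferInstance ψa.rangeRestrict.toRingHom hunits
  have hunitsE : ∀ s ∈ S, IsUnit ((ρ.comp Φ) s) := fun s hs => (hS₀ s hs).map ρ
  obtain ⟨χ, hχ, hχu⟩ := huniv (Module.End K W) inferInstance (ρ.comp Φ) hunitsE
  have h1 : ρ = χ := hχu ρ rfl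
  have h2 : ((Subalgebra.val ψa.range).toRingHom).comp ψ' = χ := by
    apply hχu
    rw [RingHom.comp_assoc, hψ']
    rfl
  intro b
  have hmem : ρ b ∈ ψa.range := by
    have : ρ b = ((Subalgebra.val ψa.range).toRingHom).comp ψ' b := by rw [h2, ← h1]
    rw [this]
    exact (ψ' b).2
  obtain ⟨a, ha⟩ := hmem
  refine ⟨a, fun w => ?_⟩
  have hw : Φ a • w = b • w := by
    have := congrArg (fun φ => φ w) ha
    simpa [hψa, hρ] using this
  rw [sub_smul, hw, sub_self]

theorem aux_bullets
    (A : Type) [Ring A]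
    (B : Type) [Ring B]
    (Φ : A →+* B)
    (W : Type) [AddCommGroup W] [Module B W]
    (hann : ∀ b : B, ∃ a : A, ∀ w : W, (b - Φ a) • w = 0)
    (M : Type) [AddCommGroup M] [Module A M]
    (MHat : Type) [AddCommGroup MHat] [Module B MHat]
    (η : M →+ MHat)
    (hηsemilin : ∀ (a : A) (x : M), η (a • x) = Φ a • η x)
    (hbc : ∀ (P : Type) (_ : AddCommGroup P) (_ : Module B P) (f : M →+ P),
      (∀ (a : A) (x : M), f (a • x) = Φ a • f x) →
        ∃! g : MHat →ₗ[B] P, ∀ x : M, g (η x) = f x) :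
    (∀ x : M,
      η x ∈ Submodule.span B {x | ∃ b : B, (∀ w : W, b • w = 0) ∧ ∃ m₀ : MHat, x = b • m₀} ↔
      x ∈ Submodule.span A {x | ∃ a : A, (∀ w : W, Φ a • w = 0) ∧ ∃ m₀ : M, x = a • m₀}) ∧
    (∀ y : MHat, ∃ x : M,
      η x - y ∈ Submodule.span B {x | ∃ b : B, (∀ w : W, b • w = 0) ∧ ∃ m₀ : MHat, x = b • m₀}) := by
  set NA : Submodule A M := Submodule.span _
    {x | ∃ a : A, (∀ w : W, Φ a • w = 0) ∧ ∃ m₀ : M, x = a • m₀} with hNAdef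
  set NB : Submodule B MHat := Submodule.span _
    {x | ∃ b : B, (∀ w : W, b • w = 0) ∧ ∃ m₀ : MHat, x = b • m₀} with hNBdef
  obtain ⟨ab, hab⟩ := Classical.axiomOfChoice hann
  have hch : ∀ (b : B) (w : W), Φ (ab b) • w = b • w := by
    intro b w
    have := hab b w
    rw [sub_smul, sub_eq_zero] at this
    exact this.symm
  have hNAgen : ∀ (a : A), (∀ w : W, Φ a • w = 0) → ∀ x : M, a • x ∈ NA :=
    fun a ha x => Submodule.subset_span ⟨a, ha, x, rfl⟩
  have hcongr : ∀ a a' : A, (∀ w : W, Φ a • w = Φ a' • w) →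
      ∀ q : M ⧸ NA, a • q = a' • q := by
    intro a a' h q
    obtain ⟨x, rfl⟩ := Submodule.Quotient.mk_surjective NA q
    rw [← Submodule.Quotient.mk_smul, ← Submodule.Quotient.mk_smul, Submodule.Quotient.eq,
      ← sub_smul]
    refine hNAgen _ (fun w => ?_) x
    rw [map_sub, sub_smul, h, sub_self]
  letI iMA : MulAction B (M ⧸ NA) :=
    { smul := fun b q => ab b • q,
      one_smul := fun q => by
        show ab 1 • q = q
        rw [hcongr (ab 1) 1 (fun w => by rw [hch, map_one]), one_smul]
      mul_smul := fun b b' q => by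
        show ab (b * b') • q = ab b • (ab b' • q)
        rw [hcongr (ab (b * b')) (ab b * ab b')
            (fun w => by rw [hch, map_mul, mul_smul, mul_smul, hch, hch]),
          mul_smul] }
  letI iDA : DistribMulAction B (M ⧸ NA) :=
    { smul_zero := fun b => by
        show ab b • (0 : M ⧸ NA) = 0
        rw [smul_zero]
      smul_add := fun b q q' => by
        show ab b • (q + q') = ab b • q + ab b • q'
        rw [smul_add] }
  letI modBP : Module B (M ⧸ NA) :=
    { add_smul := fun b b' q => by
        show ab (b + b') • q = ab b • q + ab b' • q
        rw [hcongr (ab (b + b')) (ab b + ab b')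
            (fun w => by rw [hch, map_add, add_smul, add_smul, hch, hch]),
          add_smul]
      zero_smul := fun q => by
        show ab 0 • q = 0
        rw [hcongr (ab 0) 0 (fun w => by rw [hch, map_zero]), zero_smul] }
  have hsmulP : ∀ (b : B) (q : M ⧸ NA), b • q = ab b • q := fun b q => rfl
  have hf : ∀ (a : A) (x : M),
      NA.mkQ.toAddMonoidHom (a • x) = Φ a • NA.mkQ.toAddMonoidHom x := by
    intro a x
    show Submodule.Quotient.mk (a • x) = Φ a • (Submodule.Quotient.mk x : M ⧸ NA)
    rw [hsmulP, hcongr (ab (Φ a)) a (fun w => hch (Φ a) w), Submodule.Quotient.mk_smul]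
  obtain ⟨g, hg, -⟩ := hbc (M ⧸ NA) inferInstance modBP NA.mkQ.toAddMonoidHom hf
  have hNBker : ∀ y ∈ NB, g y = 0 := by
    intro y hy
    induction hy using Submodule.span_induction with
    | mem y' hy' =>
      obtain ⟨b, hb, m₀, rfl⟩ := hy'
      rw [map_smul, hsmulP, hcongr (ab b) 0 (fun w => by rw [hch, hb, map_zero, zero_smul]),
        zero_smul]
    | zero => exact map_zero g
    | add y₁ y₂ _ _ ih₁ ih₂ => rw [map_add, ih₁, ih₂, add_zero]
    | smul b y' _ ih => rw [map_smul, ih, smul_zero]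
  refine ⟨fun x => ⟨fun hx => ?_, fun hx => ?_⟩, fun y => ?_⟩
  · -- η x ∈ NB → x ∈ NA
    have hz := hNBker (η x) hx
    rw [hg x] at hz
    have hz' : (Submodule.Quotient.mk x : M ⧸ NA) = 0 := hz
    exact (Submodule.Quotient.mk_eq_zero NA).1 hz'
  · -- x ∈ NA → η x ∈ NB
    induction hx using Submodule.span_induction with
    | mem x' hx' =>
      obtain ⟨a, ha, m₀, rfl⟩ := hx'
      rw [hηsemilin]
      exact Submodule.subset_span ⟨Φ a, ha, η m₀, rfl⟩
    | zero => rw [map_zero]; exact zero_mem NB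
    | add x₁ x₂ _ _ ih₁ ih₂ => rw [map_add]; exact add_mem ih₁ ih₂
    | smul a x' _ ih => rw [hηsemilin]; exact NB.smul_mem (Φ a) ih
  · -- surjectivity mod NB
    have hgen : Submodule.span B (Set.range ⇑η) = ⊤ := by
      set T := Submodule.span B (Set.range ⇑η) with hTdef
      have hmemT : ∀ x : M, η x ∈ T := fun x => Submodule.subset_span ⟨x, rfl⟩
      have hf2 : ∀ (a : A) (x : M),
          (T.mkQ.toAddMonoidHom.comp η) (a • x) = Φ a • (T.mkQ.toAddMonoidHom.comp η) x := by
        intro a x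
        show T.mkQ (η (a • x)) = Φ a • T.mkQ (η x)
        rw [hηsemilin, map_smul]
      obtain ⟨g₂, -, hg₂u⟩ := hbc (MHat ⧸ T) inferInstance inferInstance
        (T.mkQ.toAddMonoidHom.comp η) hf2
      have e1 : T.mkQ = g₂ := hg₂u T.mkQ (fun x => rfl)
      have e2 : (0 : MHat →ₗ[B] MHat ⧸ T) = g₂ := hg₂u 0 (fun x =>
        ((Submodule.Quotient.mk_eq_zero T).2 (hmemT x)).symm)
      rw [Submodule.eq_top_iff']
      intro y
      have hy0 : T.mkQ y = 0 := by rw [e1, ← e2]; rfl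
      rwa [Submodule.mkQ_apply, Submodule.Quotient.mk_eq_zero] at hy0
    have hy : y ∈ Submodule.span B (Set.range ⇑η) := hgen ▸ Submodule.mem_top
    clear hgen
    induction hy using Submodule.span_induction with
    | mem y' hy' =>
      obtain ⟨x, rfl⟩ := hy'
      exact ⟨x, by rw [sub_self]; exact zero_mem NB⟩
    | zero => exact ⟨0, by rw [map_zero, sub_zero]; exact zero_mem NB⟩
    | add y₁ y₂ _ _ ih₁ ih₂ =>
      obtain ⟨x₁, h₁⟩ := ih₁
      obtain ⟨x₂, h₂⟩ := ih₂
      refine ⟨x₁ + x₂, ?_⟩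
      have h4 : η (x₁ + x₂) - (y₁ + y₂) = (η x₁ - y₁) + (η x₂ - y₂) := by
        rw [map_add]; abel
      rw [h4]
      exact add_mem h₁ h₂
    | smul b y' _ ih =>
      obtain ⟨x, hx⟩ := ih
      refine ⟨ab b • x, ?_⟩
      have key : η (ab b • x) - b • y' =
          Φ (ab b) • (η x - y') + (Φ (ab b) - b) • y' := by
        rw [hηsemilin, smul_sub, sub_smul]; abel
      rw [key]
      refine add_mem (NB.smul_mem _ hx) (Submodule.subset_span ?_)
      exact ⟨Φ (ab b) - b, fun w => by rw [sub_smul, hch, sub_self], y', rfl⟩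

set_option maxHeartbeats 4000000
set_option synthInstance.maxHeartbeats 2000000

theorem microlocalised_isotypic_quotients (hp : Odd p)
    -- `G` is a uniform pro-`p` group:
    (hfg : ∃ S : Finset G, (Subgroup.closure (S : Set G)).topologicalClosure = ⊤)
    (hpowerful : (Subgroup.closure {x : G | ∃ a b : G, x = a * b * a⁻¹ * b⁻¹}).topologicalClosure
      ≤ (Subgroup.closure {x : G | ∃ g : G, x = g ^ p}).topologicalClosure)
    (htorsionfree : ∀ g : G, g ≠ 1 → ∀ n : ℕ, 0 < n → g ^ n ≠ 1)
    (hprop : ∀ N : OpenNormalSubgroup G, ∃ n : ℕ, Nat.card (G ⧸ N.toSubgroup) = p ^ n)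
    -- `B = Û(g_K)` together with the microlocalisation `Φ : K[[G]] → B = S₀⁻¹ K[[G]]`,
    -- characterised by inverting `S₀` and the universal property:
    (B : Type) (_ : Ring B) (_ : Algebra K B)
    (Φ : IwasawaK K R G →+* B)
    (hΦK : ∀ c : K, Φ (algebraMap K (IwasawaK K R G) c) = algebraMap K B c)
    (hS₀ : ∀ s ∈ oreS p R G, IsUnit (Φ (toIwasawaK K R G s)))
    (huniv : ∀ (C : Type) (_ : Ring C) (ψ : IwasawaK K R G →+* C),
      (∀ s ∈ oreS p R G, IsUnit (ψ (toIwasawaK K R G s))) →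
        ∃! ψ' : B →+* C, ψ'.comp Φ = ψ)
    -- `W` a finite-dimensional irreducible module over `B = Û(g_K)`:
    (W : Type) (_ : AddCommGroup W) (_ : Module K W) (_ : Module B W)
    (_ : IsScalarTower K B W) (_ : FiniteDimensional K W) (_ : IsSimpleModule B W)
    -- `M̃` a finitely generated `K[[G]]`-module:
    (M : Type) (_ : AddCommGroup M) (_ : Module (IwasawaK K R G) M)
    (_ : Module.Finite (IwasawaK K R G) M)
    -- `M̂ = B ⊗_{K[[G]]} M̃` with its canonical map `η`, characterised by the universal
    -- property of base change:
    (MHat : Type) (_ : AddCommGroup MHat) (_ : Module B MHat)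
    (η : M →+ MHat)
    (hηsemilin : ∀ (a : IwasawaK K R G) (x : M), η (a • x) = Φ a • η x)
    (hbc : ∀ (P : Type) (_ : AddCommGroup P) (_ : Module B P) (f : M →+ P),
      (∀ (a : IwasawaK K R G) (x : M), f (a • x) = Φ a • f x) →
        ∃! g : MHat →ₗ[B] P, ∀ x : M, g (η x) = f x) :
    -- `Ann_{K[[G]]}(W)·M̃` and `Ann_B(W)·M̂`:
    letI NA : Submodule (IwasawaK K R G) M := Submodule.span _
      {x | ∃ a : IwasawaK K R G, (∀ w : W, Φ a • w = 0) ∧ ∃ m₀ : M, x = a • m₀}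
    letI NB : Submodule B MHat := Submodule.span _
      {x | ∃ b : B, (∀ w : W, b • w = 0) ∧ ∃ m₀ : MHat, x = b • m₀}
    -- the natural map `M̃_W → M̂_W` is an isomorphism:
    ((∀ x : M, η x ∈ NB ↔ x ∈ NA) ∧ (∀ y : MHat, ∃ x : M, η x - y ∈ NB) ∧
    -- in particular `K[[G]]/Ann(W) → B/Ann_B(W) (≅ End_K W)` is an isomorphism:
      (∀ b : B, ∃ a : IwasawaK K R G, ∀ w : W, (b - Φ a) • w = 0)) := by
  letI : Ring B := ‹Ring B›
  letI : Algebra K B := ‹Algebra K B›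
  letI : AddCommGroup W := ‹AddCommGroup W›
  letI : Module K W := ‹Module K W›
  letI : Module B W := ‹Module B W›
  letI : IsScalarTower K B W := ‹IsScalarTower K B W›
  letI : FiniteDimensional K W := ‹FiniteDimensional K W›
  letI : AddCommGroup M := ‹AddCommGroup M›
  letI : Module (IwasawaK K R G) M := ‹Module (IwasawaK K R G) M›
  letI : AddCommGroup MHat := ‹AddCommGroup MHat›
  letI : Module B MHat := ‹Module B MHat›
  have h3 : ∀ b : B, ∃ a : IwasawaK K R G, ∀ w : W, (b - Φ a) • w = 0 := by
    refine aux_h3 (IwasawaK K R G) B Φ (toIwasawaK K R G '' oreS p R G) hΦK ?_ ?_ W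
    · rintro s ⟨s₀, hs₀, rfl⟩
      exact hS₀ s₀ hs₀
    · intro C iC ψ h
      exact huniv C iC ψ (fun s hs => h _ ⟨s, hs, rfl⟩)
  obtain ⟨b1, b2⟩ := aux_bullets (IwasawaK K R G) B Φ W h3 M MHat η hηsemilin hbc
  exact ⟨b1, b2, h3⟩
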